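/- Let A be a commutative ring, I a set, and R = A[(X_i)_{i∈I}] the polynomial ring. If the nilradical nil(A) of A is nilpotent (i.e., there exists n ∈ ℕ with nil(A)^n = 0), then for every monomial ideal 𝔞 ⊆ R one has Γ_{⌊𝔞⌋} = Γ_{√𝔞}, i.e., Γ_{⌊𝔞⌋}(M) = Γ_{√𝔞}(M) for every R-module M. (Implication (i) ⇒ (ii) of the unnumbered Proposition of Section 2.) -/

import Mathlib

open MvPolynomial

/-- `suppInd μ` is the characteristic function of the support of `μ`,
so that `X^(suppInd μ) = ∏_{i : μ i > 0} X i`. -/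
noncomputable def suppInd {I : Type v} (μ : I →₀ ℕ) : I →₀ ℕ :=
  μ.mapRange (fun n => if n = 0 then 0 else 1) (by simp)

/-- A monomial ideal of `A[(X_i)_{i ∈ I}]` is an ideal generated by a set of monomials. -/
def IsMonomialIdeal {A : Type u} [CommRing A] {I : Type v}
    (𝔞 : Ideal (MvPolynomial I A)) : Prop :=
  ∃ E : Set (I →₀ ℕ), 𝔞 = Ideal.span ((fun μ => monomial μ (1 : A)) '' E)

/-- `⌊𝔞⌋` is the ideal generated by the monomials `X^(suppInd μ)` for all monomials
`X^μ ∈ 𝔞`. -/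
noncomputable def mvFloor {A : Type u} [CommRing A] {I : Type v}
    (𝔞 : Ideal (MvPolynomial I A)) : Ideal (MvPolynomial I A) :=
  Ideal.span {f | ∃ μ : I →₀ ℕ, monomial μ (1 : A) ∈ 𝔞 ∧ f = monomial (suppInd μ) (1 : A)}

/-! Since `𝔞 ⊆ ⌊𝔞⌋ ⊆ √𝔞`, it suffices to bound a power of `√𝔞` by `⌊𝔞⌋`. The ideal `⌊𝔞⌋` is
generated by squarefree monomials, and for such an ideal `𝔟` the leading term (for any monomial
order) of `f ∈ √𝔟` is either a multiple of a generator or has a nilpotent coefficient: if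
`f ^ k ∈ 𝔟`, the coefficient of `f ^ k` at `k • deg f` is `lc f ^ k`, and a squarefree monomial
dividing `X ^ (k • ν)` divides `X ^ ν`. Peeling off leading terms gives `√𝔟 ⊆ 𝔟 + nil(A) R`,
and `nil(A) ^ c = 0` then yields `(√𝔞) ^ (1 + c) ⊆ ⌊𝔞⌋`. -/

-- `MonomialOrder.lex` needs `WellFoundedGT`, hence the order dual of a well-order.
instance MonomialOrder.instNonempty (σ : Type w) : Nonempty (MonomialOrder.{w, w} σ) :=
  letI : LinearOrder σ := IsWellOrder.linearOrder WellOrderingRel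
  haveI : WellFoundedLT σ := ⟨WellOrderingRel.isWellOrder.wf⟩
  ⟨MonomialOrder.lex (σ := σᵒᵈ)⟩

theorem Finsupp.le_of_le_nsmul_of_forall_le_one {σ : Type*} {s ν : σ →₀ ℕ}
    (hs : ∀ i, s i ≤ 1) {k : ℕ} (h : s ≤ k • ν) : s ≤ ν := by
  intro i
  have hi : s i ≤ k * ν i := h i
  rcases Nat.eq_zero_or_pos (ν i) with hν | hν
  · simpa [hν] using hi
  · exact (hs i).trans hν

theorem Ideal.exists_pow_le_of_pow_le {R : Type*} [CommSemiring R] {I J K : Ideal R} {m : ℕ}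
    (hJI : J ^ m ≤ I) : (∃ n, I ^ n ≤ K) → ∃ n, J ^ n ≤ K := by
  rintro ⟨n, hn⟩
  exact ⟨m * n, by rw [pow_mul]; exact (Ideal.pow_right_mono hJI n).trans hn⟩

theorem MonomialOrder.exists_le_degree_or_isNilpotent_leadingCoeff {σ R : Type*}
    [CommSemiring R] (m : MonomialOrder σ) {S : Set (σ →₀ ℕ)} (hS : ∀ s ∈ S, ∀ i, s i ≤ 1)
    {f : MvPolynomial σ R} (hf : f ∈ (Ideal.span ((fun s => monomial s (1 : R)) '' S)).radical) :
    (∃ s ∈ S, s ≤ m.degree f) ∨ IsNilpotent (m.leadingCoeff f) := by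
  obtain ⟨k, hk⟩ := hf
  by_cases hlc : m.leadingCoeff f ^ k = 0
  · exact Or.inr ⟨k, hlc⟩
  rw [← m.coeff_pow_nsmul_degree, ← ne_eq, ← mem_support_iff] at hlc
  obtain ⟨s, hs, hsk⟩ := mem_ideal_span_monomial_image.mp hk _ hlc
  exact Or.inl ⟨s, hs, Finsupp.le_of_le_nsmul_of_forall_le_one (hS s hs) hsk⟩

namespace MvPolynomial

variable {σ R : Type*}

theorem monomial_mem_of_le [CommSemiring R] {I : Ideal (MvPolynomial σ R)} {s ν : σ →₀ ℕ}
    (hsν : s ≤ ν) (c : R) (hs : monomial s 1 ∈ I) : monomial ν c ∈ I :=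
  I.mem_of_dvd (monomial_dvd_monomial.mpr ⟨Or.inr hsν, one_dvd c⟩) hs

theorem radical_span_monomial_le_sup_map_nilradical [CommRing R] {S : Set (σ →₀ ℕ)}
    (hS : ∀ s ∈ S, ∀ i, s i ≤ 1) :
    (Ideal.span ((fun s => monomial s (1 : R)) '' S)).radical ≤
      Ideal.span ((fun s => monomial s (1 : R)) '' S) ⊔ (nilradical R).map C := by
  set 𝔟 := Ideal.span ((fun s => monomial s (1 : R)) '' S)
  obtain ⟨m⟩ := MonomialOrder.instNonempty σ
  have hlead (f : MvPolynomial σ R) (hf : f ∈ 𝔟.radical) :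
      m.leadingTerm f ∈ 𝔟.radical ∧ m.leadingTerm f ∈ 𝔟 ⊔ (nilradical R).map C := by
    rcases m.exists_le_degree_or_isNilpotent_leadingCoeff hS hf with ⟨s, hs, hsf⟩ | ⟨k, hk⟩
    · have hmem : m.leadingTerm f ∈ 𝔟 :=
        monomial_mem_of_le hsf _ (Ideal.subset_span ⟨s, hs, rfl⟩)
      exact ⟨Ideal.le_radical hmem, Ideal.mem_sup_left hmem⟩
    · refine ⟨⟨k, ?_⟩, Ideal.mem_sup_right ?_⟩
      · rw [MonomialOrder.leadingTerm, monomial_pow, hk, monomial_zero]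
        exact zero_mem _
      · rw [MonomialOrder.leadingTerm, ← mul_one (m.leadingCoeff f), ← C_mul_monomial]
        exact Ideal.mul_mem_right _ _ (Ideal.mem_map_of_mem _ ⟨k, hk⟩)
  intro f hf
  induction hdeg : m.toSyn (m.degree f) using WellFoundedLT.induction generalizing f with
  | _ d ih =>
  obtain ⟨hrad, hsup⟩ := hlead f hf
  rw [← sub_add_cancel f (m.leadingTerm f)]
  refine add_mem ?_ hsup
  by_cases hrest : f - m.leadingTerm f = 0
  · rw [hrest]
    exact zero_mem _
  exact ih _ (hdeg ▸ m.degree_sub_leadingTerm_lt_degree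
    (m.degree_ne_zero_of_sub_leadingTerm_ne_zero hrest)) (Ideal.sub_mem _ hf hrad) rfl

end MvPolynomial

section Floor

variable {A : Type u} [CommRing A] {I : Type v}

theorem suppInd_apply (μ : I →₀ ℕ) (i : I) : suppInd μ i = if μ i = 0 then 0 else 1 := by
  simp [suppInd]

theorem suppInd_apply_le_one (μ : I →₀ ℕ) (i : I) : suppInd μ i ≤ 1 := by
  rw [suppInd_apply]
  split <;> omega

theorem suppInd_le (μ : I →₀ ℕ) : suppInd μ ≤ μ := by
  intro i
  rw [suppInd_apply]
  split <;> omega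

theorem le_degree_nsmul_suppInd (μ : I →₀ ℕ) : μ ≤ μ.degree • suppInd μ := by
  intro i
  have := Finsupp.le_degree i μ
  simp only [Finsupp.smul_apply, smul_eq_mul, suppInd_apply]
  split <;> omega

theorem mvFloor_eq_span (𝔞 : Ideal (MvPolynomial I A)) :
    mvFloor 𝔞 = Ideal.span ((fun s => monomial s (1 : A)) ''
      (suppInd '' {μ : I →₀ ℕ | monomial μ (1 : A) ∈ 𝔞})) := by
  rw [Set.image_image, mvFloor]
  congr 1
  ext f
  simp [eq_comm]

theorem le_mvFloor {𝔞 : Ideal (MvPolynomial I A)} (h : IsMonomialIdeal 𝔞) : 𝔞 ≤ mvFloor 𝔞 := by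
  obtain ⟨E, rfl⟩ := h
  refine Ideal.span_le.mpr ?_
  rintro _ ⟨μ, hμ, rfl⟩
  exact monomial_mem_of_le (suppInd_le μ) 1
    (Ideal.subset_span ⟨μ, Ideal.subset_span ⟨μ, hμ, rfl⟩, rfl⟩)

theorem mvFloor_le_radical (𝔞 : Ideal (MvPolynomial I A)) : mvFloor 𝔞 ≤ 𝔞.radical := by
  refine Ideal.span_le.mpr ?_
  rintro _ ⟨μ, hμ, rfl⟩
  refine ⟨μ.degree, ?_⟩
  rw [monomial_pow, one_pow]
  exact monomial_mem_of_le (le_degree_nsmul_suppInd μ) 1 hμ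

theorem radical_le_mvFloor_sup_map_nilradical {𝔞 : Ideal (MvPolynomial I A)}
    (h : IsMonomialIdeal 𝔞) : 𝔞.radical ≤ mvFloor 𝔞 ⊔ (nilradical A).map C := by
  refine (Ideal.radical_mono (le_mvFloor h)).trans ?_
  rw [mvFloor_eq_span]
  exact radical_span_monomial_le_sup_map_nilradical (by
    rintro _ ⟨μ, -, rfl⟩
    exact suppInd_apply_le_one μ)

end Floor

/-- implication (i) ⇒ (ii) of the unnumbered Proposition of Section 2:
if the nilradical of `A` is nilpotent, then for every monomial ideal `𝔞` of
`R = A[(X_i)_{i ∈ I}]` the torsion functors `Γ_⌊𝔞⌋` and `Γ_√𝔞` coincide. -/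
theorem torsion_floor_eq_torsion_radical_of_nilpotent_nilradical
    {A : Type u} [CommRing A] {I : Type v}
    (hnil : ∃ n : ℕ, nilradical A ^ n = 0)
    (𝔞 : Ideal (MvPolynomial I A)) (h : IsMonomialIdeal 𝔞) :
    ∀ (M : Type (max u v)) [AddCommGroup M] [Module (MvPolynomial I A) M] (x : M),
      (∃ n : ℕ, (mvFloor 𝔞) ^ n ≤ Ideal.torsionOf (MvPolynomial I A) M x) ↔
        (∃ n : ℕ, 𝔞.radical ^ n ≤ Ideal.torsionOf (MvPolynomial I A) M x) := by
  obtain ⟨c, hc⟩ := hnil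
  have hJ : (nilradical A).map (C : A →+* MvPolynomial I A) ^ c = ⊥ := by
    rw [← Ideal.map_pow, hc, Ideal.zero_eq_bot, Ideal.map_bot]
  have hpow : 𝔞.radical ^ (1 + c) ≤ mvFloor 𝔞 :=
    calc 𝔞.radical ^ (1 + c) ≤ (mvFloor 𝔞 ⊔ (nilradical A).map C) ^ (1 + c) :=
          Ideal.pow_right_mono (radical_le_mvFloor_sup_map_nilradical h) _
      _ ≤ mvFloor 𝔞 ^ 1 ⊔ (nilradical A).map C ^ c := Ideal.sup_pow_add_le_pow_sup_pow
      _ = mvFloor 𝔞 := by rw [pow_one, hJ, sup_bot_eq]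
  intro M _ _ x
  exact ⟨Ideal.exists_pow_le_of_pow_le hpow,
    Ideal.exists_pow_le_of_pow_le (pow_one (mvFloor 𝔞) ▸ mvFloor_le_radical 𝔞)⟩
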